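/- arXiv:1411.6520 — 5 statements merged into one kernel-verified Lean document; each statement's English description precedes it below -/
import Mathlib

section
/- Let g, β ∈ ℝᵖ, λ ≥ 0, A a symmetric p×p real matrix, S_1, …, S_M a partition of {1,…,p}, and Ã the block-diagonal submatrix of A with respect to this partition. Define F(d) = gᵀd + ½ dᵀÃd + λ‖β + d‖₁ for d ∈ ℝᵖ, and for each m define F_m(e) = gᵀe + ½ eᵀAe + λ Σ_{j ∈ S_m} |β_j + e_j| on vectors e supported on S_m. Then a vector d* ∈ ℝᵖ minimizes F over ℝᵖ if and only if, for every m = 1,…,M, the restriction of d* to S_m (extended by zeros outside S_m) minimizes F_m over vectors supported on S_m. -/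
open Matrix

/-- The vector `d*` minimizes `F(d) = gᵀd + ½ dᵀÃd + λ‖β + d‖₁` over `ℝᵖ` if and only if,
for every block `m`, its restriction to `S_m` minimizes
`F_m(e) = gᵀe + ½ eᵀAe + λ Σ_{j ∈ S_m}|β_j + e_j|` over vectors supported on `S_m`. -/
theorem block_separable_penalized_quadratic_min_iff
    (p M : ℕ) (g b : Fin p → ℝ) (lam : ℝ) (hlam : 0 ≤ lam)
    (A : Matrix (Fin p) (Fin p) ℝ) (hA : A.IsSymm)
    (S : Fin M → Finset (Fin p))
    (hdisj : ∀ m k : Fin M, m ≠ k → Disjoint (S m) (S k))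
    (hcover : ∀ j : Fin p, ∃ m : Fin M, j ∈ S m)
    (Atil : Matrix (Fin p) (Fin p) ℝ)
    (hAtil : ∀ j l : Fin p,
      Atil j l = if ∃ m : Fin M, j ∈ S m ∧ l ∈ S m then A j l else 0)
    (F : (Fin p → ℝ) → ℝ)
    (hF : ∀ d : Fin p → ℝ,
      F d = g ⬝ᵥ d + (1 / 2) * (d ⬝ᵥ Atil.mulVec d) + lam * ∑ j, |b j + d j|)
    (Fm : Fin M → (Fin p → ℝ) → ℝ)
    (hFm : ∀ (m : Fin M) (e : Fin p → ℝ),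
      Fm m e = g ⬝ᵥ e + (1 / 2) * (e ⬝ᵥ A.mulVec e) + lam * ∑ j ∈ S m, |b j + e j|)
    (dstar : Fin p → ℝ)
    (r : Fin M → Fin p → ℝ)
    (hr : ∀ (m : Fin M) (j : Fin p), r m j = if j ∈ S m then dstar j else 0) :
    (∀ d : Fin p → ℝ, F dstar ≤ F d) ↔
      (∀ m : Fin M, ∀ e : Fin p → ℝ, (∀ j, j ∉ S m → e j = 0) → Fm m (r m) ≤ Fm m e) := by
  classical
  -- unique block containing each index
  have hunique : ∀ (j : Fin p) (m k : Fin M), j ∈ S m → j ∈ S k → m = k := by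
    intro j m k hm hk
    by_contra h
    exact Finset.disjoint_left.mp (hdisj m k h) hm hk
  choose blk hblk using hcover
  have hmem : ∀ (j : Fin p) (m : Fin M), j ∈ S m ↔ blk j = m := by
    intro j m
    constructor
    · intro h; exact hunique j (blk j) m (hblk j) h
    · rintro rfl; exact hblk j
  -- projection onto a block
  let proj : Fin M → (Fin p → ℝ) → Fin p → ℝ :=
    fun m d j => if j ∈ S m then d j else 0
  have hprojdef : ∀ m d j, proj m d j = if j ∈ S m then d j else 0 := fun _ _ _ => rfl
  -- summing over blocks covers everything
  have hsum : ∀ f : Fin p → ℝ, (∑ m : Fin M, ∑ j ∈ S m, f j) = ∑ j, f j := by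
    intro f
    have hSm : ∀ m : Fin M, S m = Finset.univ.filter (fun j => blk j = m) := by
      intro m; ext j; simp [hmem j m]
    calc (∑ m : Fin M, ∑ j ∈ S m, f j)
        = ∑ m : Fin M, ∑ j ∈ Finset.univ.filter (fun j => blk j = m), f j := by
          exact Finset.sum_congr rfl fun m _ => by rw [hSm m]
      _ = ∑ j, f j := Finset.sum_fiberwise _ _ _
  -- collapsing the sum over blocks of a pair indicator
  have hite : ∀ (j l : Fin p) (x : ℝ),
      (∑ m : Fin M, if j ∈ S m ∧ l ∈ S m then x else 0) =
        if ∃ m : Fin M, j ∈ S m ∧ l ∈ S m then x else 0 := by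
    intro j l x
    simp only [hmem]
    by_cases h : blk j = blk l
    · rw [if_pos ⟨blk j, rfl, h.symm⟩, h]
      simp [Finset.sum_ite_eq]
    · rw [if_neg (by rintro ⟨m, rfl, hl⟩; exact h hl.symm)]
      apply Finset.sum_eq_zero
      intro m _
      exact if_neg (by rintro ⟨rfl, hl⟩; exact h hl.symm)
  -- decomposition of F into block functions
  have hdecomp : ∀ d : Fin p → ℝ, F d = ∑ m : Fin M, Fm m (proj m d) := by
    intro d
    rw [hF]
    have h1 : (∑ m : Fin M, g ⬝ᵥ proj m d) = g ⬝ᵥ d := by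
      simp only [dotProduct]
      have h1' : ∀ m : Fin M, (∑ j, g j * proj m d j) = ∑ j ∈ S m, g j * d j := by
        intro m
        simp only [hprojdef, mul_ite, mul_zero]
        rw [Finset.sum_ite_mem, Finset.univ_inter]
      rw [Finset.sum_congr rfl fun m _ => h1' m, hsum]
    have h2 : (∑ m : Fin M, proj m d ⬝ᵥ A.mulVec (proj m d)) = d ⬝ᵥ Atil.mulVec d := by
      simp only [dotProduct, Matrix.mulVec, Finset.mul_sum]
      have lhs : ∀ m : Fin M,
          (∑ j, ∑ l, proj m d j * (A j l * proj m d l)) =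
            ∑ j, ∑ l, if j ∈ S m ∧ l ∈ S m then d j * (A j l * d l) else 0 := by
        intro m
        refine Finset.sum_congr rfl fun j _ => Finset.sum_congr rfl fun l _ => ?_
        by_cases hj : j ∈ S m <;> by_cases hl : l ∈ S m <;>
          simp [hprojdef, hj, hl]
      rw [Finset.sum_congr rfl fun m _ => lhs m]
      rw [Finset.sum_comm]
      refine Finset.sum_congr rfl fun j _ => ?_
      rw [Finset.sum_comm]
      refine Finset.sum_congr rfl fun l _ => ?_
      rw [hite, hAtil]
      by_cases h : ∃ m : Fin M, j ∈ S m ∧ l ∈ S m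
      · rw [if_pos h, if_pos h]
      · rw [if_neg h, if_neg h, zero_mul, mul_zero]
    have h3 : (∑ m : Fin M, ∑ j ∈ S m, |b j + proj m d j|) = ∑ j, |b j + d j| := by
      have : ∀ m : Fin M, (∑ j ∈ S m, |b j + proj m d j|) = ∑ j ∈ S m, |b j + d j| := by
        intro m
        refine Finset.sum_congr rfl fun j hj => ?_
        rw [hprojdef, if_pos hj]
      rw [Finset.sum_congr rfl fun m _ => this m, hsum]
    calc g ⬝ᵥ d + 1 / 2 * (d ⬝ᵥ Atil.mulVec d) + lam * ∑ j, |b j + d j|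
        = (∑ m : Fin M, g ⬝ᵥ proj m d) +
            (1 / 2) * (∑ m : Fin M, proj m d ⬝ᵥ A.mulVec (proj m d)) +
            lam * (∑ m : Fin M, ∑ j ∈ S m, |b j + proj m d j|) := by
          rw [h1, h2, h3]
      _ = ∑ m : Fin M, Fm m (proj m d) := by
          simp only [hFm, Finset.sum_add_distrib, Finset.mul_sum]
  have hrdef : ∀ m : Fin M, r m = proj m dstar := by
    intro m; funext j; rw [hr, hprojdef]
  constructor
  · -- forward
    intro hmin m e he
    let d : Fin p → ℝ := fun j => if j ∈ S m then e j else dstar j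
    have hdj : ∀ j, d j = if j ∈ S m then e j else dstar j := fun _ => rfl
    have hpe : proj m d = e := by
      funext j
      by_cases hj : j ∈ S m
      · rw [hprojdef, if_pos hj, hdj, if_pos hj]
      · rw [hprojdef, if_neg hj, he j hj]
    have hpk : ∀ k : Fin M, k ≠ m → proj k d = proj k dstar := by
      intro k hk
      funext j
      by_cases hj : j ∈ S k
      · have hjm : j ∉ S m := fun hjm => hk (hunique j k m hj hjm)
        rw [hprojdef, hprojdef, if_pos hj, if_pos hj, hdj, if_neg hjm]
      · rw [hprojdef, hprojdef, if_neg hj, if_neg hj]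
    have h1 := hmin d
    rw [hdecomp dstar, hdecomp d] at h1
    rw [← Finset.add_sum_erase Finset.univ _ (Finset.mem_univ m),
        ← Finset.add_sum_erase Finset.univ _ (Finset.mem_univ m)] at h1
    have heq : (∑ k ∈ Finset.univ.erase m, Fm k (proj k dstar)) =
        ∑ k ∈ Finset.univ.erase m, Fm k (proj k d) := by
      refine Finset.sum_congr rfl fun k hk => ?_
      rw [hpk k (Finset.ne_of_mem_erase hk)]
    rw [heq] at h1
    have := le_of_add_le_add_right h1
    rw [hrdef m, ← hpe]
    exact this
  · -- backward
    intro hmin d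
    rw [hdecomp dstar, hdecomp d]
    refine Finset.sum_le_sum fun m _ => ?_
    have hsupp : ∀ j, j ∉ S m → proj m d j = 0 := by
      intro j hj; rw [hprojdef, if_neg hj]
    have := hmin m (proj m d) hsupp
    rwa [hrdef m] at this
end

section
/- Let a > 0, λ ≥ 0, and b ∈ ℝ. Define the soft-thresholding operator T(x, a) = sgn(x)·max(|x| − a, 0). Then the function φ(z) = ½ a z² − b z + λ|z| on ℝ attains its minimum at the unique point z* = T(b, λ)/a; that is, φ(z*) ≤ φ(z) for all z ∈ ℝ, with equality only when z = z*. -/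
/-- For `a > 0`, `λ ≥ 0`, `b ∈ ℝ`, the function `φ(z) = ½ a z² − b z + λ|z|` attains its
minimum at the unique point `z* = T(b, λ)/a`, where `T(x, a) = sgn(x)·max(|x| − a, 0)` is
the soft-thresholding operator. -/
theorem soft_threshold_minimizes_penalized_quadratic
    (a lam b : ℝ) (ha : 0 < a) (hlam : 0 ≤ lam)
    (T : ℝ → ℝ → ℝ)
    (hT : ∀ x c : ℝ, T x c = Real.sign x * max (|x| - c) 0)
    (phi : ℝ → ℝ)
    (hphi : ∀ z : ℝ, phi z = (1 / 2) * a * z ^ 2 - b * z + lam * |z|)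
    (zstar : ℝ) (hzstar : zstar = T b lam / a) :
    (∀ z : ℝ, phi zstar ≤ phi z) ∧ (∀ z : ℝ, phi z = phi zstar → z = zstar) := by
  have key : ∀ z : ℝ, 0 ≤ (a * zstar - b) * (z - zstar) + lam * (|z| - |zstar|) := by
    intro z
    rcases lt_trichotomy b (-lam) with h1 | h1 | h1
    · -- b < -lam ≤ 0
      have hbneg : b < 0 := lt_of_lt_of_le h1 (by linarith)
      have hsign : Real.sign b = -1 := Real.sign_of_neg hbneg
      have habs : |b| = -b := abs_of_neg hbneg
      have hmax : max (|b| - lam) 0 = |b| - lam := max_eq_left (by linarith [abs_of_neg hbneg])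
      have hz : zstar = (b + lam) / a := by
        rw [hzstar, hT, hsign, hmax, habs]; ring
      have hzneg : zstar < 0 := by
        rw [hz]; exact div_neg_of_neg_of_pos (by linarith) ha
      have habz : |zstar| = -zstar := abs_of_neg hzneg
      have haz : a * zstar = b + lam := by
        rw [hz]; field_simp
      rw [habz, haz]
      have h2 : -z ≤ |z| := neg_le_abs z
      nlinarith
    · -- b = -lam
      have hmax : max (|b| - lam) 0 = 0 := max_eq_right (by rw [h1, abs_neg, abs_of_nonneg hlam]; linarith)
      have hz : zstar = 0 := by rw [hzstar, hT, hmax, mul_zero, zero_div]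
      rw [hz]
      simp only [abs_zero, mul_zero, zero_sub, sub_zero]
      have h2 : -z ≤ |z| := neg_le_abs z
      subst h1
      nlinarith [mul_nonneg hlam (by linarith : (0:ℝ) ≤ |z| + z)]
    · rcases lt_trichotomy b lam with h2 | h2 | h2
      · -- |b| < lam
        have hmax : max (|b| - lam) 0 = 0 := by
          apply max_eq_right
          rcases le_or_gt 0 b with hb | hb
          · rw [abs_of_nonneg hb]; linarith
          · rw [abs_of_neg hb]; linarith
        have hz : zstar = 0 := by rw [hzstar, hT, hmax, mul_zero, zero_div]
        rw [hz]
        simp only [abs_zero, mul_zero, zero_sub, sub_zero]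
        have h3 : b * z ≤ |b| * |z| := le_trans (le_abs_self _) (le_of_eq (abs_mul b z))
        have h4 : |b| ≤ lam := by
          rcases le_or_gt 0 b with hb | hb
          · rw [abs_of_nonneg hb]; linarith
          · rw [abs_of_neg hb]; linarith
        nlinarith [abs_nonneg z]
      · -- b = lam
        have hmax : max (|b| - lam) 0 = 0 := max_eq_right (by rw [← h2, abs_of_nonneg (h2 ▸ hlam)]; linarith)
        have hz : zstar = 0 := by rw [hzstar, hT, hmax, mul_zero, zero_div]
        rw [hz]
        simp only [abs_zero, mul_zero, zero_sub, sub_zero]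
        have h3 : z ≤ |z| := le_abs_self z
        subst h2
        nlinarith [mul_nonneg hlam (by linarith : (0:ℝ) ≤ |z| - z)]
      · -- lam < b
        have hbpos : 0 < b := lt_of_le_of_lt hlam h2
        have hsign : Real.sign b = 1 := Real.sign_of_pos hbpos
        have habs : |b| = b := abs_of_pos hbpos
        have hmax : max (|b| - lam) 0 = |b| - lam := max_eq_left (by rw [habs]; linarith)
        have hz : zstar = (b - lam) / a := by
          rw [hzstar, hT, hsign, hmax, habs]; ring
        have hzpos : 0 < zstar := by
          rw [hz]; exact div_pos (by linarith) ha
        have habz : |zstar| = zstar := abs_of_pos hzpos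
        have haz : a * zstar = b - lam := by
          rw [hz]; field_simp
        rw [habz, haz]
        have h3 : z ≤ |z| := le_abs_self z
        nlinarith
  have hge : ∀ z : ℝ, phi zstar + (a / 2) * (z - zstar) ^ 2 ≤ phi z := by
    intro z
    have h := key z
    rw [hphi z, hphi zstar]
    nlinarith
  constructor
  · intro z
    have h := hge z
    nlinarith [sq_nonneg (z - zstar)]
  · intro z heq
    have h := hge z
    rw [heq] at h
    have h2 : (z - zstar) ^ 2 = 0 := by nlinarith [sq_nonneg (z - zstar)]
    have := pow_eq_zero_iff (n := 2) (by norm_num) |>.mp h2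
    linarith [sub_eq_zero.mp this]
end

section
/- Let n ≥ 1, let w_1, …, w_n > 0, z_1, …, z_n ∈ ℝ, λ ≥ 0, and let x_1, …, x_n ∈ ℝᵖ and β, Δβ ∈ ℝᵖ. Fix a coordinate j with Σ_{i=1}^n w_i x_{ij}² > 0, and define q_i = z_i − Δβᵀx_i + (β_j + Δβ_j)x_{ij}. Then the function t ↦ ½ Σ_{i=1}^n w_i (z_i − (Δβ + (t − Δβ_j)e_j)ᵀ x_i)² + λ|β_j + t| of the j-th update t ∈ ℝ is uniquely minimized at t* = Δβ_j + Δβ_j^*, where Δβ_j^* = T(Σ_{i=1}^n w_i x_{ij} q_i, λ) / (Σ_{i=1}^n w_i x_{ij}²) − (β_j + Δβ_j), and T(x, a) = sgn(x)·max(|x| − a, 0) is the soft-thresholding operator. -/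
open Matrix

lemma cdst_key_ineq (A B lam s sstar : ℝ) (hA : 0 < A) (hlam : 0 ≤ lam)
    (hs : A * sstar = Real.sign B * max (|B| - lam) 0) :
    0 ≤ (A * sstar - B) * (s - sstar) + lam * (|s| - |sstar|) := by
  rcases lt_trichotomy B 0 with hB | hB | hB
  · rw [Real.sign_of_neg hB, abs_of_neg hB] at hs
    rcases le_or_gt (-B) lam with h | h
    · have h0 : max (-B - lam) 0 = 0 := max_eq_right (by linarith)
      rw [h0, mul_zero] at hs
      have hss : sstar = 0 := by
        rcases mul_eq_zero.mp hs with h' | h'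
        · exact absurd h' hA.ne'
        · exact h'
      subst hss
      simp only [sub_zero, abs_zero, mul_zero, zero_mul]
      nlinarith [le_abs_self s, neg_abs_le s, abs_nonneg s]
    · have h0 : max (-B - lam) 0 = -B - lam := max_eq_left (by linarith)
      rw [h0] at hs
      have hss : A * sstar = B + lam := by linarith [hs]
      have hneg : sstar < 0 := by nlinarith
      rw [abs_of_neg hneg]
      have : (A * sstar - B) * (s - sstar) + lam * (|s| - -sstar)
          = lam * (|s| + s) := by rw [hss]; ring
      rw [this]
      nlinarith [neg_abs_le s]
  · subst hB
    simp only [Real.sign_zero, zero_mul] at hs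
    have hss : sstar = 0 := by
      rcases mul_eq_zero.mp hs with h' | h'
      · exact absurd h' hA.ne'
      · exact h'
    subst hss
    simp only [sub_zero, abs_zero, mul_zero, zero_mul]
    nlinarith [abs_nonneg s]
  · rw [Real.sign_of_pos hB, abs_of_pos hB, one_mul] at hs
    rcases le_or_gt B lam with h | h
    · have h0 : max (B - lam) 0 = 0 := max_eq_right (by linarith)
      rw [h0] at hs
      have hss : sstar = 0 := by
        rcases mul_eq_zero.mp hs with h' | h'
        · exact absurd h' hA.ne'
        · exact h'
      subst hss
      simp only [sub_zero, abs_zero, mul_zero, zero_mul]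
      nlinarith [le_abs_self s, neg_abs_le s, abs_nonneg s]
    · have h0 : max (B - lam) 0 = B - lam := max_eq_left (by linarith)
      rw [h0] at hs
      have hpos' : 0 < sstar := by nlinarith
      rw [abs_of_pos hpos']
      have : (A * sstar - B) * (s - sstar) + lam * (|s| - sstar)
          = lam * (|s| - s) := by rw [hs]; ring
      rw [this]
      nlinarith [le_abs_self s]

/-- The closed-form single-coordinate update of coordinate descent on the penalized
quadratic approximation: the function
`t ↦ ½ Σ_i w_i (z_i − (Δβ + (t − Δβ_j)e_j)ᵀ x_i)² + λ|β_j + t|`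
is uniquely minimized at `t* = Δβ_j + Δβ_j^*`, where
`Δβ_j^* = T(Σ_i w_i x_{ij} q_i, λ)/(Σ_i w_i x_{ij}²) − (β_j + Δβ_j)`. -/
theorem coordinate_descent_soft_threshold_update
    (n p : ℕ) (hn : 1 ≤ n)
    (w : Fin n → ℝ) (hw : ∀ i, 0 < w i)
    (z : Fin n → ℝ) (lam : ℝ) (hlam : 0 ≤ lam)
    (x : Fin n → Fin p → ℝ) (b db : Fin p → ℝ) (j : Fin p)
    (hpos : 0 < ∑ i, w i * (x i j) ^ 2)
    (q : Fin n → ℝ)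
    (hq : ∀ i, q i = z i - db ⬝ᵥ x i + (b j + db j) * x i j)
    (T : ℝ → ℝ → ℝ)
    (hT : ∀ u c : ℝ, T u c = Real.sign u * max (|u| - c) 0)
    (phi : ℝ → ℝ)
    (hphi : ∀ t : ℝ, phi t =
      (1 / 2) * ∑ i, w i * (z i - (db + (t - db j) • (Pi.single j 1 : Fin p → ℝ)) ⬝ᵥ x i) ^ 2
        + lam * |b j + t|)
    (dbjstar tstar : ℝ)
    (hdbjstar : dbjstar =
      T (∑ i, w i * x i j * q i) lam / (∑ i, w i * (x i j) ^ 2) - (b j + db j))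
    (htstar : tstar = db j + dbjstar) :
    (∀ t : ℝ, phi tstar ≤ phi t) ∧ (∀ t : ℝ, phi t = phi tstar → t = tstar) := by
  set A := ∑ i, w i * (x i j) ^ 2 with hA
  set B := ∑ i, w i * x i j * q i with hB
  set Q := ∑ i, w i * (q i) ^ 2 with hQ
  -- simplify phi
  have hdot : ∀ (c : ℝ) (i : Fin n),
      (db + c • (Pi.single j 1 : Fin p → ℝ)) ⬝ᵥ x i = db ⬝ᵥ x i + c * x i j := by
    intro c i
    rw [add_dotProduct, smul_dotProduct]
    congr 1
    simp [dotProduct, Pi.single_apply, Finset.sum_ite_eq', mul_comm]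
  have hphi2 : ∀ t : ℝ, phi t =
      (1 / 2) * (Q - 2 * (b j + t) * B + (b j + t) ^ 2 * A) + lam * |b j + t| := by
    intro t
    rw [hphi t]
    congr 1
    have hterm : ∀ i : Fin n,
        w i * (z i - (db + (t - db j) • (Pi.single j 1 : Fin p → ℝ)) ⬝ᵥ x i) ^ 2
        = w i * (q i) ^ 2 - 2 * (b j + t) * (w i * x i j * q i)
          + (b j + t) ^ 2 * (w i * (x i j) ^ 2) := by
      intro i
      rw [hdot]
      have hqi := hq i
      have : z i - (db ⬝ᵥ x i + (t - db j) * x i j) = q i - (b j + t) * x i j := by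
        rw [hqi]; ring
      rw [this]; ring
    rw [Finset.sum_congr rfl fun i _ => hterm i]
    rw [Finset.sum_add_distrib, Finset.sum_sub_distrib, ← Finset.mul_sum, ← Finset.mul_sum]
  have hAne : A ≠ 0 := ne_of_gt hpos
  have hsstar : A * (b j + tstar) = Real.sign B * max (|B| - lam) 0 := by
    rw [htstar, hdbjstar, hT]
    field_simp
    ring
  -- main inequality
  have main : ∀ t : ℝ, phi tstar + (1 / 2) * A * ((b j + t) - (b j + tstar)) ^ 2 ≤ phi t := by
    intro t
    have hk := cdst_key_ineq A B lam (b j + t) (b j + tstar) hpos hlam hsstar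
    rw [hphi2 t, hphi2 tstar]
    nlinarith [hk]
  constructor
  · intro t
    have := main t
    nlinarith [sq_nonneg ((b j + t) - (b j + tstar)), hpos]
  · intro t heq
    have := main t
    have hsq : A * ((b j + t) - (b j + tstar)) ^ 2 ≤ 0 := by linarith
    have : ((b j + t) - (b j + tstar)) ^ 2 ≤ 0 := by
      nlinarith [hpos]
    have h0 : ((b j + t) - (b j + tstar)) ^ 2 = 0 :=
      le_antisymm this (sq_nonneg _)
    have := pow_eq_zero_iff (n := 2) (by norm_num) |>.mp h0
    linarith
end

section
/- Let x_1, …, x_n ∈ ℝᵖ, y_1, …, y_n ∈ {−1, +1}, ν > 0, and let S_1, …, S_M be a partition of {1,…,p}. For β ∈ ℝᵖ, let H̃(β) be the block-diagonal submatrix of the logistic Hessian ∇²L(β) = Σ_{i=1}^n w_i x_i x_iᵀ (with w_i = p_i(1 − p_i), p_i = 1/(1 + exp(−⟨β, x_i⟩))) with respect to the partition, and set H(β) = H̃(β) + νI. Then there exist constants λ_min, λ_max > 0, independent of β — namely λ_min = ν and λ_max = ν + ¼ Σ_{i=1}^n ‖x_i‖² — such that λ_min I ⪯ H(β) ⪯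 λ_max I for all β ∈ ℝᵖ. -/
open Matrix

/-- The matrix `H(β) = H̃(β) + νI` used by d-GLMNET, where `H̃(β)` is the block-diagonal
submatrix of the logistic Hessian `∇²L(β) = Σ_i w_i x_i x_iᵀ`, satisfies the uniform
spectral bounds `λ_min I ⪯ H(β) ⪯ λ_max I` with `λ_min = ν > 0` and
`λ_max = ν + ¼ Σ_i ‖x_i‖² > 0`, independently of `β`. -/
theorem dGLMNET_matrix_uniform_spectral_bounds
    (n p M : ℕ) (x : Fin n → Fin p → ℝ)
    (y : Fin n → ℝ) (hy : ∀ i, y i = 1 ∨ y i = -1)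
    (nu : ℝ) (hnu : 0 < nu)
    (S : Fin M → Finset (Fin p))
    (hdisj : ∀ m k : Fin M, m ≠ k → Disjoint (S m) (S k))
    (hcover : ∀ j : Fin p, ∃ m : Fin M, j ∈ S m)
    (pr w : (Fin p → ℝ) → Fin n → ℝ)
    (hpr : ∀ (β : Fin p → ℝ) (i : Fin n), pr β i = 1 / (1 + Real.exp (-(β ⬝ᵥ x i))))
    (hw : ∀ (β : Fin p → ℝ) (i : Fin n), w β i = pr β i * (1 - pr β i))
    (H : (Fin p → ℝ) → Matrix (Fin p) (Fin p) ℝ)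
    (hH : ∀ (β : Fin p → ℝ) (j l : Fin p),
      H β j l = (if ∃ m : Fin M, j ∈ S m ∧ l ∈ S m then ∑ i, w β i * x i j * x i l else 0)
        + (if j = l then nu else 0)) :
    ∃ lammin lammax : ℝ,
      lammin = nu ∧ lammax = nu + (1 / 4) * ∑ i, x i ⬝ᵥ x i ∧
      0 < lammin ∧ 0 < lammax ∧
      ∀ (β v : Fin p → ℝ),
        lammin * (v ⬝ᵥ v) ≤ v ⬝ᵥ (H β).mulVec v ∧
        v ⬝ᵥ (H β).mulVec v ≤ lammax * (v ⬝ᵥ v) := by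
  classical
  -- weights are in [0, 1/4]
  have hw0 : ∀ β i, 0 ≤ w β i := by
    intro β i
    rw [hw, hpr]
    have he : 0 < Real.exp (-(β ⬝ᵥ x i)) := Real.exp_pos _
    have h1 : (0:ℝ) < 1 + Real.exp (-(β ⬝ᵥ x i)) := by linarith
    have hp0 : 0 < 1 / (1 + Real.exp (-(β ⬝ᵥ x i))) := by positivity
    have hp1 : 1 / (1 + Real.exp (-(β ⬝ᵥ x i))) < 1 := by
      rw [div_lt_one h1]; linarith
    nlinarith
  have hw4 : ∀ β i, w β i ≤ 1/4 := by
    intro β i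
    rw [hw, hpr]
    nlinarith [sq_nonneg (1 / (1 + Real.exp (-(β ⬝ᵥ x i))) - 1/2)]
  -- choose the block of each coordinate
  let f : Fin p → Fin M := fun j => (hcover j).choose
  have hf : ∀ j, j ∈ S (f j) := fun j => (hcover j).choose_spec
  have huniq : ∀ (j : Fin p) (m : Fin M), j ∈ S m → f j = m := by
    intro j m hm
    by_contra h
    exact Finset.disjoint_left.mp (hdisj _ _ h) (hf j) hm
  have hiff : ∀ j l : Fin p, (∃ m : Fin M, j ∈ S m ∧ l ∈ S m) ↔ f j = f l := by
    intro j l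
    constructor
    · rintro ⟨m, hj, hl⟩
      rw [huniq j m hj, huniq l m hl]
    · intro h
      exact ⟨f j, hf j, h ▸ hf l⟩
  -- grouping a double sum over same-block pairs into fibers
  have fiber : ∀ a : Fin p → ℝ,
      (∑ j, ∑ l, if f j = f l then a j * a l else 0)
        = ∑ m, (∑ j ∈ Finset.univ.filter (fun j => f j = m), a j)^2 := by
    intro a
    have h1 : ∀ j : Fin p, (∑ l, if f j = f l then a j * a l else 0)
        = a j * ∑ l ∈ Finset.univ.filter (fun l => f l = f j), a l := by
      intro j
      rw [Finset.mul_sum, Finset.sum_filter]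
      refine Finset.sum_congr rfl fun l _ => ?_
      by_cases h : f l = f j
      · rw [if_pos h.symm, if_pos h]
      · rw [if_neg h, if_neg (fun h' : f j = f l => h h'.symm)]
    simp only [h1]
    rw [← Finset.sum_fiberwise Finset.univ f
      (fun j => a j * ∑ l ∈ Finset.univ.filter (fun l => f l = f j), a l)]
    refine Finset.sum_congr rfl fun m _ => ?_
    have hinner : ∀ j ∈ Finset.univ.filter (fun j => f j = m),
        a j * (∑ l ∈ Finset.univ.filter (fun l => f l = f j), a l)
          = a j * ∑ l ∈ Finset.univ.filter (fun l => f l = m), a l := by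
      intro j hj
      simp only [Finset.mem_filter] at hj
      rw [hj.2]
    rw [Finset.sum_congr rfl hinner, ← Finset.sum_mul, sq]
  have hxx : ∀ i, (0:ℝ) ≤ x i ⬝ᵥ x i := fun i =>
    Finset.sum_nonneg fun j _ => mul_self_nonneg _
  refine ⟨nu, nu + (1/4) * ∑ i, x i ⬝ᵥ x i, rfl, rfl, hnu, ?_, ?_⟩
  · have : (0:ℝ) ≤ ∑ i, x i ⬝ᵥ x i := Finset.sum_nonneg fun i _ => hxx i
    linarith
  intro β v
  -- expand the quadratic form
  have expand : v ⬝ᵥ (H β).mulVec v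
      = (∑ i, w β i * ∑ m, (∑ j ∈ Finset.univ.filter (fun j => f j = m), v j * x i j)^2)
        + nu * (v ⬝ᵥ v) := by
    simp only [dotProduct, mulVec, hH]
    have step : ∀ j : Fin p, v j * (∑ l, ((if ∃ m : Fin M, j ∈ S m ∧ l ∈ S m then
          ∑ i, w β i * x i j * x i l else 0) + (if j = l then nu else 0)) * v l)
        = (∑ l, ∑ i, if f j = f l then w β i * ((v j * x i j) * (v l * x i l)) else 0)
          + nu * (v j * v j) := by
      intro j
      rw [Finset.mul_sum]
      have hterm : ∀ l : Fin p, v j * (((if ∃ m : Fin M, j ∈ S m ∧ l ∈ S m then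
            ∑ i, w β i * x i j * x i l else 0) + (if j = l then nu else 0)) * v l)
          = (∑ i, if f j = f l then w β i * ((v j * x i j) * (v l * x i l)) else 0)
            + (if j = l then nu * (v j * v l) else 0) := by
        intro l
        rw [if_congr (hiff j l) rfl rfl]
        by_cases h : f j = f l <;> by_cases h' : j = l <;>
            simp only [h, h', if_true, if_false, if_pos, if_neg, not_false_iff,
              Finset.sum_const_zero] <;>
          first
            | (rw [add_mul, mul_add, Finset.sum_mul, Finset.mul_sum]
               refine congrArg₂ (· + ·) (Finset.sum_congr rfl fun i _ => by ring) (by ring))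
            | ring
      simp only [hterm]
      rw [Finset.sum_add_distrib]
      congr 1
      rw [Finset.sum_ite_eq Finset.univ j (fun l => nu * (v j * v l))]
      simp
    simp only [step]
    rw [Finset.sum_add_distrib]
    congr 1
    · calc (∑ j, ∑ l, ∑ i, if f j = f l then w β i * ((v j * x i j) * (v l * x i l)) else 0)
          = ∑ j, ∑ i, ∑ l, if f j = f l then w β i * ((v j * x i j) * (v l * x i l)) else 0 :=
            Finset.sum_congr rfl fun j _ => Finset.sum_comm
        _ = ∑ i, ∑ j, ∑ l, if f j = f l then w β i * ((v j * x i j) * (v l * x i l)) else 0 :=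
            Finset.sum_comm
        _ = _ := by
            refine Finset.sum_congr rfl fun i _ => ?_
            rw [← fiber (fun j => v j * x i j), Finset.mul_sum]
            refine Finset.sum_congr rfl fun j _ => ?_
            rw [Finset.mul_sum]
            refine Finset.sum_congr rfl fun l _ => ?_
            split <;> simp
    · rw [Finset.mul_sum]
  rw [expand]
  have hBnn : ∀ i, (0:ℝ) ≤ ∑ m, (∑ j ∈ Finset.univ.filter (fun j => f j = m), v j * x i j)^2 :=
    fun i => Finset.sum_nonneg fun m _ => sq_nonneg _
  constructor
  · have : (0:ℝ) ≤ ∑ i, w β i * ∑ m,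
        (∑ j ∈ Finset.univ.filter (fun j => f j = m), v j * x i j)^2 :=
      Finset.sum_nonneg fun i _ => mul_nonneg (hw0 β i) (hBnn i)
    nlinarith [this]
  · -- upper bound
    have hvv : (0:ℝ) ≤ v ⬝ᵥ v := Finset.sum_nonneg fun j _ => mul_self_nonneg _
    have hB : ∀ i, (∑ m, (∑ j ∈ Finset.univ.filter (fun j => f j = m), v j * x i j)^2)
        ≤ (v ⬝ᵥ v) * (x i ⬝ᵥ x i) := by
      intro i
      have step1 : ∀ m : Fin M,
          (∑ j ∈ Finset.univ.filter (fun j => f j = m), v j * x i j)^2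
            ≤ (∑ j ∈ Finset.univ.filter (fun j => f j = m), v j ^ 2) * (x i ⬝ᵥ x i) := by
        intro m
        calc (∑ j ∈ Finset.univ.filter (fun j => f j = m), v j * x i j)^2
            ≤ (∑ j ∈ Finset.univ.filter (fun j => f j = m), v j ^ 2)
              * (∑ j ∈ Finset.univ.filter (fun j => f j = m), x i j ^ 2) :=
              Finset.sum_mul_sq_le_sq_mul_sq _ _ _
          _ ≤ (∑ j ∈ Finset.univ.filter (fun j => f j = m), v j ^ 2) * (x i ⬝ᵥ x i) := by
              refine mul_le_mul_of_nonneg_left ?_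
                (Finset.sum_nonneg fun j _ => sq_nonneg _)
              calc (∑ j ∈ Finset.univ.filter (fun j => f j = m), x i j ^ 2)
                  ≤ ∑ j, x i j ^ 2 :=
                    Finset.sum_le_sum_of_subset_of_nonneg (Finset.filter_subset _ _)
                      (fun j _ _ => sq_nonneg _)
                _ = x i ⬝ᵥ x i := by
                    simp [dotProduct, sq]
      calc (∑ m, (∑ j ∈ Finset.univ.filter (fun j => f j = m), v j * x i j)^2)
          ≤ ∑ m, (∑ j ∈ Finset.univ.filter (fun j => f j = m), v j ^ 2) * (x i ⬝ᵥ x i) :=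
            Finset.sum_le_sum fun m _ => step1 m
        _ = (∑ m, ∑ j ∈ Finset.univ.filter (fun j => f j = m), v j ^ 2) * (x i ⬝ᵥ x i) := by
            rw [Finset.sum_mul]
        _ = (v ⬝ᵥ v) * (x i ⬝ᵥ x i) := by
            rw [Finset.sum_fiberwise Finset.univ f (fun j => v j ^ 2)]
            simp [dotProduct, sq]
    have hsum : (∑ i, w β i * ∑ m,
        (∑ j ∈ Finset.univ.filter (fun j => f j = m), v j * x i j)^2)
        ≤ ∑ i, (1/4) * ((v ⬝ᵥ v) * (x i ⬝ᵥ x i)) := by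
      refine Finset.sum_le_sum fun i _ => ?_
      calc w β i * ∑ m, (∑ j ∈ Finset.univ.filter (fun j => f j = m), v j * x i j)^2
          ≤ (1/4) * ∑ m, (∑ j ∈ Finset.univ.filter (fun j => f j = m), v j * x i j)^2 :=
            mul_le_mul_of_nonneg_right (hw4 β i) (hBnn i)
        _ ≤ (1/4) * ((v ⬝ᵥ v) * (x i ⬝ᵥ x i)) := by
            have := hB i; linarith
    have : (∑ i, (1/4) * ((v ⬝ᵥ v) * (x i ⬝ᵥ x i)))
        = (1/4) * (∑ i, x i ⬝ᵥ x i) * (v ⬝ᵥ v) := by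
      rw [← Finset.mul_sum,
        show (∑ i, (v ⬝ᵥ v) * (x i ⬝ᵥ x i)) = (v ⬝ᵥ v) * ∑ i, x i ⬝ᵥ x i from
          (Finset.mul_sum _ _ _).symm]
      ring
    nlinarith [hsum]
end

section
/- Let g, β ∈ ℝᵖ, λ ≥ 0, ν > 0, and let H be a symmetric p×p real matrix with H ⪰ νI. Suppose d ∈ ℝᵖ minimizes the penalized quadratic model q(e) = gᵀe + ½ eᵀHe + λ‖β + e‖₁ over e ∈ ℝᵖ. Then the quantity D = gᵀd + λ(‖β + d‖₁ − ‖β‖₁) satisfies D ≤ −dᵀHd ≤ −ν‖d‖²; in particular D < 0 whenever d ≠ 0. -/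
open Matrix

/-- If `d` minimizes the penalized quadratic model `q(e) = gᵀe + ½ eᵀHe + λ‖β + e‖₁` with
`H ⪰ νI`, then the predicted decrease `D = gᵀd + λ(‖β + d‖₁ − ‖β‖₁)` satisfies
`D ≤ −dᵀHd ≤ −ν‖d‖²`; in particular `D < 0` whenever `d ≠ 0`. -/
theorem predicted_decrease_of_penalized_quadratic_minimizer
    (p : ℕ) (g b : Fin p → ℝ) (lam nu : ℝ) (hlam : 0 ≤ lam) (hnu : 0 < nu)
    (H : Matrix (Fin p) (Fin p) ℝ) (hsymm : H.IsSymm)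
    (hpd : ∀ v : Fin p → ℝ, nu * (v ⬝ᵥ v) ≤ v ⬝ᵥ H.mulVec v)
    (q : (Fin p → ℝ) → ℝ)
    (hq : ∀ e : Fin p → ℝ,
      q e = g ⬝ᵥ e + (1 / 2) * (e ⬝ᵥ H.mulVec e) + lam * ∑ j, |b j + e j|)
    (d : Fin p → ℝ) (hmin : ∀ e : Fin p → ℝ, q d ≤ q e)
    (D : ℝ)
    (hD : D = g ⬝ᵥ d + lam * ((∑ j, |b j + d j|) - ∑ j, |b j|)) :
    D ≤ -(d ⬝ᵥ H.mulVec d) ∧ -(d ⬝ᵥ H.mulVec d) ≤ -(nu * (d ⬝ᵥ d)) ∧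
      (d ≠ 0 → D < 0) := by
  set A := d ⬝ᵥ H.mulVec d with hA
  have hdd : (0:ℝ) ≤ d ⬝ᵥ d := by
    simp only [dotProduct]
    exact Finset.sum_nonneg fun j _ => mul_self_nonneg _
  have hA0 : 0 ≤ A := le_trans (by positivity) (hpd d)
  -- key: for all α ∈ [0,1), D ≤ -((1+α)/2) * A
  have key : ∀ α : ℝ, 0 ≤ α → α < 1 → D ≤ -((1 + α) / 2) * A := by
    intro α hα0 hα1
    have h := hmin (α • d)
    rw [hq d, hq (α • d)] at h
    have hg : g ⬝ᵥ (α • d) = α * (g ⬝ᵥ d) := by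
      rw [dotProduct_smul]; simp [smul_eq_mul]
    have hHv : (α • d) ⬝ᵥ H.mulVec (α • d) = α * α * A := by
      rw [Matrix.mulVec_smul, dotProduct_smul, smul_dotProduct]
      simp [hA, smul_eq_mul]; ring
    have hnorm : (∑ j, |b j + (α • d) j|) ≤
        α * (∑ j, |b j + d j|) + (1 - α) * (∑ j, |b j|) := by
      rw [Finset.mul_sum, Finset.mul_sum, ← Finset.sum_add_distrib]
      apply Finset.sum_le_sum
      intro j _
      have : b j + (α • d) j = α * (b j + d j) + (1 - α) * (b j) := by
        simp [smul_eq_mul]; ring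
      rw [this]
      calc |α * (b j + d j) + (1 - α) * b j| ≤
          |α * (b j + d j)| + |(1 - α) * b j| := abs_add_le _ _
        _ = α * |b j + d j| + (1 - α) * |b j| := by
            have h1α : (0:ℝ) ≤ 1 - α := by linarith
            rw [abs_mul, abs_mul, abs_of_nonneg hα0, abs_of_nonneg h1α]
    rw [hg, hHv] at h
    have hlamnorm : lam * (∑ j, |b j + (α • d) j|) ≤
        lam * (α * (∑ j, |b j + d j|) + (1 - α) * (∑ j, |b j|)) :=
      mul_le_mul_of_nonneg_left hnorm hlam
    have h1 : g ⬝ᵥ d + (1/2) * A + lam * (∑ j, |b j + d j|) ≤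
        α * (g ⬝ᵥ d) + (1/2) * (α * α * A) +
          lam * (α * (∑ j, |b j + d j|) + (1 - α) * (∑ j, |b j|)) :=
      le_trans h (by linarith)
    have h2 : (1 - α) * (D + ((1 + α)/2) * A) ≤ 0 := by
      rw [hD]; nlinarith [h1]
    nlinarith [h2, sub_pos.mpr hα1]
  have hDA : D ≤ -A := by
    apply le_of_forall_pos_le_add
    intro ε hε
    set m : ℝ := min 1 (ε / (A + 1)) with hm
    have hm0 : 0 < m := lt_min one_pos (by positivity)
    have hm1 : m ≤ 1 := min_le_left _ _
    have hkey := key (1 - m) (by linarith) (by linarith)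
    have hmA : m * A ≤ ε := by
      have h1 : m ≤ ε / (A + 1) := min_le_right _ _
      have h2 : m * A ≤ (ε / (A + 1)) * A :=
        mul_le_mul_of_nonneg_right h1 hA0
      have h3 : (ε / (A + 1)) * A ≤ ε := by
        rw [div_mul_eq_mul_div, div_le_iff₀ (by linarith)]
        nlinarith
      linarith
    nlinarith [hkey]
  have hAnu : -A ≤ -(nu * (d ⬝ᵥ d)) := by
    have := hpd d
    linarith
  refine ⟨hDA, hAnu, fun hd => ?_⟩
  have hddpos : 0 < d ⬝ᵥ d := by
    rcases lt_or_eq_of_le hdd with h | h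
    · exact h
    · exfalso; apply hd
      funext j
      have hsum : ∑ i, d i * d i = 0 := by
        have := h.symm; simpa [dotProduct] using this
      have hj := (Finset.sum_eq_zero_iff_of_nonneg
        (fun i _ => mul_self_nonneg (d i))).mp hsum j (Finset.mem_univ j)
      exact mul_self_eq_zero.mp hj
  have : 0 < nu * (d ⬝ᵥ d) := mul_pos hnu hddpos
  linarith
end
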